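/- arXiv:1104.4530 — 5 statements merged into one kernel-verified Lean document; each statement's English description precedes it below -/
import Mathlib

section
/- For a real symmetric nonsingular matrix A, the matrix |A|^{-1}A has minimal polynomial dividing λ² − 1; equivalently, (|A|^{-1}A)² = I. Consequently, a Krylov subspace minimal residual method preconditioned with T = |A|^{-1} converges to the exact solution of Ax = b in at most two steps. -/
open Matrix

/-- The matrix absolute value `|A| = V |Λ| V*` of a real symmetric matrix,
defined via the eigendecomposition `A = V Λ V*`. -/
noncomputable def matAbs {n : Type*} [Fintype n] [DecidableEq n]
    {A : Matrix n n ℝ} (hA : A.IsHermitian) : Matrix n n ℝ :=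
  (hA.eigenvectorUnitary : Matrix n n ℝ) *
    Matrix.diagonal (fun i => |hA.eigenvalues i|) *
    star (hA.eigenvectorUnitary : Matrix n n ℝ)

/-- For a real symmetric nonsingular matrix `A`, `(|A|⁻¹ A)² = I`: the minimal
polynomial of the ideally preconditioned matrix divides `λ² − 1`, so the
preconditioned minimal residual method with `T = |A|⁻¹` converges in at most
two steps. -/
theorem matAbs_inv_mul_sq_eq_one {n : Type*} [Fintype n] [DecidableEq n]
    {A : Matrix n n ℝ} (hA : A.IsHermitian) (hdet : IsUnit A.det) :
    ((matAbs hA)⁻¹ * A) ^ 2 = 1 := by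
  set V : Matrix n n ℝ := (hA.eigenvectorUnitary : Matrix n n ℝ) with hV
  have hVV : V * star V = 1 := (Matrix.mem_unitaryGroup_iff).mp hA.eigenvectorUnitary.2
  have hVV' : star V * V = 1 := (Matrix.mem_unitaryGroup_iff').mp hA.eigenvectorUnitary.2
  have heig : ∀ i, hA.eigenvalues i ≠ 0 := by
    intro i hi
    rw [hA.det_eq_prod_eigenvalues] at hdet
    have := hdet.ne_zero
    exact this (Finset.prod_eq_zero (Finset.mem_univ i) (by simpa using hi))
  have key : ∀ B C : Matrix n n ℝ, (V * B * star V) * (V * C * star V) =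
      V * (B * C) * star V := by
    intro B C
    simp only [mul_assoc]
    rw [← mul_assoc (star V) V, hVV', one_mul]
  -- inverse of matAbs
  have habs_inv : (matAbs hA)⁻¹ =
      V * Matrix.diagonal (fun i => |hA.eigenvalues i|⁻¹) * star V := by
    apply Matrix.inv_eq_right_inv
    show V * Matrix.diagonal (fun i => |hA.eigenvalues i|) * star V *
      (V * Matrix.diagonal (fun i => |hA.eigenvalues i|⁻¹) * star V) = 1
    rw [key, Matrix.diagonal_mul_diagonal]
    have : (fun i => |hA.eigenvalues i| * |hA.eigenvalues i|⁻¹) = fun _ => (1 : ℝ) := by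
      funext i
      exact mul_inv_cancel₀ (abs_ne_zero.mpr (heig i))
    rw [this, Matrix.diagonal_one, mul_one, hVV]
  have hspec : A = V * Matrix.diagonal (fun i => hA.eigenvalues i) * star V := by
    have := hA.spectral_theorem
    simpa using this
  have hgoal : ((matAbs hA)⁻¹ * A) ^ 2 =
      ((V * Matrix.diagonal (fun i => |hA.eigenvalues i|⁻¹) * star V) *
        (V * Matrix.diagonal (fun i => hA.eigenvalues i) * star V)) ^ 2 := by
    rw [habs_inv, ← hspec]
  rw [hgoal, key, pow_two, key, Matrix.diagonal_mul_diagonal, Matrix.diagonal_mul_diagonal]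
  have : (fun i => |hA.eigenvalues i|⁻¹ * hA.eigenvalues i *
      (|hA.eigenvalues i|⁻¹ * hA.eigenvalues i)) = fun _ => (1 : ℝ) := by
    funext i
    have h := heig i
    rw [mul_mul_mul_comm, ← mul_inv, abs_mul_abs_self]
    rw [inv_mul_cancel₀ (by positivity)]
  rw [this, Matrix.diagonal_one, mul_one, hVV]
end

section
/- For a real symmetric nonsingular matrix A, |(v, A^{-1} v)| ≤ (v, |A|^{-1} v) for all vectors v. -/
open Matrix

lemma conj_diag_inv {n : Type*} [Fintype n] [DecidableEq n]
    (U : Matrix n n ℝ) (hU : U ∈ Matrix.unitaryGroup n ℝ)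
    (d : n → ℝ) (hd : ∀ i, d i ≠ 0) :
    (U * Matrix.diagonal d * star U)⁻¹ = U * Matrix.diagonal d⁻¹ * star U := by
  apply Matrix.inv_eq_right_inv
  have h1 : star U * U = 1 := hU.1
  have h2 : U * star U = 1 := hU.2
  calc U * Matrix.diagonal d * star U * (U * Matrix.diagonal d⁻¹ * star U)
      = U * (Matrix.diagonal d * ((star U * U) * (Matrix.diagonal d⁻¹ * star U))) := by
        simp only [Matrix.mul_assoc]
    _ = U * ((Matrix.diagonal d * Matrix.diagonal d⁻¹) * star U) := by
        rw [h1, Matrix.one_mul]; simp only [← Matrix.mul_assoc]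
    _ = 1 := by
        rw [Matrix.diagonal_mul_diagonal]
        have : (fun i => d i * d⁻¹ i) = fun _ => (1 : ℝ) := by
          funext i; simp [Pi.inv_apply, mul_inv_cancel₀ (hd i)]
        rw [this, Matrix.diagonal_one, Matrix.one_mul, h2]

lemma quad_form_eq {n : Type*} [Fintype n] [DecidableEq n]
    (U : Matrix n n ℝ) (c : n → ℝ) (v : n → ℝ) :
    v ⬝ᵥ (U * Matrix.diagonal c * star U) *ᵥ v
      = ∑ i, c i * ((star U *ᵥ v) i) ^ 2 := by
  have hstar : star U = Uᵀ := Matrix.conjTranspose_eq_transpose_of_trivial U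
  rw [← Matrix.mulVec_mulVec, ← Matrix.mulVec_mulVec, Matrix.dotProduct_mulVec,
    ← Matrix.mulVec_transpose, ← hstar]
  simp only [dotProduct, Matrix.mulVec_diagonal]
  exact Finset.sum_congr rfl fun i _ => by ring

/-- For a real symmetric nonsingular matrix `A`,
`|(v, A⁻¹ v)| ≤ (v, |A|⁻¹ v)` for all `v`. -/
theorem abs_rayleigh_inv_le {n : Type*} [Fintype n] [DecidableEq n]
    {A : Matrix n n ℝ} (hA : A.IsHermitian) (hdet : IsUnit A.det)
    (v : n → ℝ) :
    |v ⬝ᵥ A⁻¹.mulVec v| ≤ v ⬝ᵥ ((matAbs hA)⁻¹).mulVec v := by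
  set U : Matrix n n ℝ := (hA.eigenvectorUnitary : Matrix n n ℝ) with hUdef
  have hUmem : U ∈ Matrix.unitaryGroup n ℝ := hA.eigenvectorUnitary.2
  set d : n → ℝ := hA.eigenvalues with hddef
  have hd : ∀ i, d i ≠ 0 := by
    intro i hi
    have hprod := hA.det_eq_prod_eigenvalues
    rw [hprod] at hdet
    have := hdet.ne_zero
    apply this
    apply Finset.prod_eq_zero (Finset.mem_univ i)
    simpa using hi
  have hspec : A = U * Matrix.diagonal d * star U := by
    have := hA.spectral_theorem
    simpa using this
  have habsd : ∀ i, |d i| ≠ 0 := fun i => abs_ne_zero.mpr (hd i)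
  have hAinv : A⁻¹ = U * Matrix.diagonal d⁻¹ * star U := by
    rw [hspec]; exact conj_diag_inv U hUmem d hd
  have hMinv : (matAbs hA)⁻¹ = U * Matrix.diagonal (fun i => |d i|)⁻¹ * star U := by
    unfold matAbs
    exact conj_diag_inv U hUmem (fun i => |d i|) habsd
  rw [hAinv, hMinv, quad_form_eq, quad_form_eq]
  set w := star U *ᵥ v
  calc |∑ i, d⁻¹ i * w i ^ 2| ≤ ∑ i, |d⁻¹ i * w i ^ 2| :=
        Finset.abs_sum_le_sum_abs _ _
    _ = ∑ i, (fun i => |d i|)⁻¹ i * w i ^ 2 := by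
        refine Finset.sum_congr rfl fun i _ => ?_
        rw [abs_mul, abs_pow, sq_abs]
        simp [abs_inv]
end

section
/- Let A ∈ ℝ^{n×n} be symmetric nonsingular indefinite and T ∈ ℝ^{n×n} symmetric positive definite. Let μ₁ ≤ ... ≤ μₙ be the eigenvalues of T|A| and λ₁ ≤ ... ≤ λ_p < 0 < λ_{p+1} ≤ ... ≤ λₙ the eigenvalues of TA. Then for j = 1,...,n one has −μ_{n−j+1} ≤ λ_j ≤ μ_j. -/
/-!
Write `T = R²` with `R = T^{1/2}`. Since `charpoly (R · RB) = charpoly (RB · R)`, the eigenvalues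
of `TA` and `T|A|` are those of the symmetric matrices `S = RAR` and `M = R|A|R`. From
`-|A| ≤ A ≤ |A|` in the Loewner order, conjugation by `R` gives `-M ≤ S ≤ M`, and Weyl's
monotonicity principle turns this into `λ_j ≤ μ_j` and `-μ_{n-j+1} ≤ λ_j`. Weyl's principle itself
is the Courant–Fischer dimension count: the span of the eigenvectors of `S` for its `n - j + 1`
largest eigenvalues and that of `M` for its `j` smallest ones meet in a nonzero vector.
-/
open Matrix Polynomial

open Module Submodule RCLike

lemma Submodule.exists_mem_inf_ne_zero_of_finrank_lt {K V : Type*} [DivisionRing K]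
    [AddCommGroup V] [Module K V] [FiniteDimensional K V] {U W : Submodule K V}
    (h : finrank K V < finrank K U + finrank K W) : ∃ x ∈ U, x ∈ W ∧ x ≠ 0 := by
  by_contra! hUW
  exact (finrank_add_finrank_le_of_disjoint (disjoint_def.mpr hUW)).not_gt h

lemma Monotone.eq_of_map_univ_val_eq {α : Type*} [LinearOrder α] {n : ℕ} {f g : Fin n → α}
    (hf : Monotone f) (hg : Monotone g) (h : Finset.univ.val.map f = Finset.univ.val.map g) :
    f = g := by
  refine List.ofFn_injective (List.Perm.eq_of_sortedLE (List.sortedLE_ofFn_iff.mpr hf)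
    (List.sortedLE_ofFn_iff.mpr hg) (Multiset.coe_eq_coe.mp ?_))
  simpa only [Fin.univ_val_map] using h

lemma Polynomial.roots_prod_univ_X_sub_C {R ι : Type*} [CommRing R] [IsDomain R] [Fintype ι]
    (f : ι → R) : (∏ i, (X - C (f i))).roots = Finset.univ.val.map f := by
  rw [roots_prod _ _ (Finset.prod_ne_zero_iff.mpr fun i _ => X_sub_C_ne_zero (f i))]
  simp

namespace OrthonormalBasis

variable {ι 𝕜 E : Type*} [Fintype ι] [RCLike 𝕜] [NormedAddCommGroup E] [InnerProductSpace 𝕜 E]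

lemma repr_eq_zero_of_mem_span_image (b : OrthonormalBasis ι 𝕜 E) {s : Set ι} {x : E}
    (hx : x ∈ span 𝕜 (b '' s)) {i : ι} (hi : i ∉ s) : b.repr x i = 0 := by
  rw [b.repr_apply_apply]
  induction hx using span_induction with
  | mem y hy =>
    obtain ⟨k, hk, rfl⟩ := hy
    exact b.orthonormal.inner_eq_zero (ne_of_mem_of_not_mem hk hi).symm
  | zero => exact inner_zero_right _
  | add y z _ _ hy hz => rw [inner_add_right, hy, hz, add_zero]
  | smul c y _ hy => rw [inner_smul_right, hy, mul_zero]

lemma finrank_span_image (b : OrthonormalBasis ι 𝕜 E) (s : Finset ι) :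
    finrank 𝕜 (span 𝕜 (b '' s)) = s.card := by
  rw [Set.image_eq_range]
  exact (finrank_span_eq_card
    (b.orthonormal.linearIndependent.comp _ Subtype.val_injective)).trans (by simp)

end OrthonormalBasis

namespace LinearMap.IsSymmetric

variable {𝕜 E : Type*} [RCLike 𝕜] [NormedAddCommGroup E] [InnerProductSpace 𝕜 E]
  [FiniteDimensional 𝕜 E] {n : ℕ} {T T' : E →ₗ[𝕜] E}

lemma re_inner_sub_mul_norm_sq_eq_sum (hT : T.IsSymmetric) (hn : finrank 𝕜 E = n) (c : ℝ)
    (x : E) :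
    re (inner 𝕜 x (T x)) - c * ‖x‖ ^ 2 =
      ∑ i, (hT.eigenvalues hn i - c) * ‖(hT.eigenvectorBasis hn).repr x i‖ ^ 2 := by
  set b := hT.eigenvectorBasis hn
  have hquad : inner 𝕜 x (T x) = ∑ i, (hT.eigenvalues hn i : 𝕜) * ‖b.repr x i‖ ^ 2 := by
    rw [← b.repr.inner_map_map, PiLp.inner_apply]
    refine Finset.sum_congr rfl fun i _ => ?_
    rw [hT.eigenvectorBasis_apply_self_apply, inner_apply, mul_assoc, mul_conj]
  have hnorm : ‖x‖ ^ 2 = ∑ i, ‖b.repr x i‖ ^ 2 := by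
    rw [← b.repr.norm_map, EuclideanSpace.norm_sq_eq]
  simp only [hquad, hnorm, map_sum, Finset.mul_sum, ← Finset.sum_sub_distrib, sub_mul]
  norm_cast

lemma exists_finrank_eq_forall_eigenvalues_mul_le (hT : T.IsSymmetric) (hn : finrank 𝕜 E = n)
    (i : Fin n) : ∃ U : Submodule 𝕜 E, finrank 𝕜 U = i + 1 ∧
      ∀ x ∈ U, hT.eigenvalues hn i * ‖x‖ ^ 2 ≤ re (inner 𝕜 x (T x)) := by
  refine ⟨span 𝕜 (hT.eigenvectorBasis hn '' Finset.Iic i), by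
    rw [OrthonormalBasis.finrank_span_image, Fin.card_Iic], fun x hx => ?_⟩
  rw [← sub_nonneg, hT.re_inner_sub_mul_norm_sq_eq_sum hn]
  refine Finset.sum_nonneg fun k _ => ?_
  by_cases hk : k ≤ i
  · exact mul_nonneg (sub_nonneg.mpr (hT.eigenvalues_antitone hn hk)) (sq_nonneg _)
  · simp [(hT.eigenvectorBasis hn).repr_eq_zero_of_mem_span_image hx (by simpa using hk)]

lemma exists_finrank_eq_forall_le_eigenvalues_mul (hT : T.IsSymmetric) (hn : finrank 𝕜 E = n)
    (i : Fin n) : ∃ W : Submodule 𝕜 E, finrank 𝕜 W = n - i ∧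
      ∀ x ∈ W, re (inner 𝕜 x (T x)) ≤ hT.eigenvalues hn i * ‖x‖ ^ 2 := by
  refine ⟨span 𝕜 (hT.eigenvectorBasis hn '' Finset.Ici i), by
    rw [OrthonormalBasis.finrank_span_image, Fin.card_Ici], fun x hx => ?_⟩
  rw [← sub_nonpos, hT.re_inner_sub_mul_norm_sq_eq_sum hn]
  refine Finset.sum_nonpos fun k _ => ?_
  by_cases hk : i ≤ k
  · exact mul_nonpos_of_nonpos_of_nonneg (sub_nonpos.mpr (hT.eigenvalues_antitone hn hk))
      (sq_nonneg _)
  · simp [(hT.eigenvectorBasis hn).repr_eq_zero_of_mem_span_image hx (by simpa using hk)]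

lemma eigenvalues_le_of_isPositive_sub (hT : T.IsSymmetric) (hT' : T'.IsSymmetric)
    (hn : finrank 𝕜 E = n) (h : (T' - T).IsPositive) (i : Fin n) :
    hT.eigenvalues hn i ≤ hT'.eigenvalues hn i := by
  obtain ⟨U, hU, hTU⟩ := hT.exists_finrank_eq_forall_eigenvalues_mul_le hn i
  obtain ⟨W, hW, hT'W⟩ := hT'.exists_finrank_eq_forall_le_eigenvalues_mul hn i
  obtain ⟨x, hxU, hxW, hx⟩ := exists_mem_inf_ne_zero_of_finrank_lt (U := U) (W := W) (by omega)
  have hTT' : re (inner 𝕜 x (T x)) ≤ re (inner 𝕜 x (T' x)) := by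
    simpa [inner_sub_right] using h.re_inner_nonneg_right x
  exact le_of_mul_le_mul_right ((hTU x hxU).trans (hTT'.trans (hT'W x hxW))) (by positivity)

lemma neg_eigenvalues_rev_le_of_isPositive_add (hT : T.IsSymmetric) (hT' : T'.IsSymmetric)
    (hn : finrank 𝕜 E = n) (h : (T + T').IsPositive) (i : Fin n) :
    -hT'.eigenvalues hn i.rev ≤ hT.eigenvalues hn i := by
  obtain ⟨U, hU, hTU⟩ := hT.exists_finrank_eq_forall_le_eigenvalues_mul hn i
  obtain ⟨W, hW, hT'W⟩ := hT'.exists_finrank_eq_forall_le_eigenvalues_mul hn i.rev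
  obtain ⟨x, hxU, hxW, hx⟩ := exists_mem_inf_ne_zero_of_finrank_lt (U := U) (W := W) (by
    rw [Fin.val_rev] at hW; omega)
  have hTT' : 0 ≤ re (inner 𝕜 x (T x)) + re (inner 𝕜 x (T' x)) := by
    simpa [inner_add_right] using h.re_inner_nonneg_right x
  refine le_of_mul_le_mul_right ?_ (by positivity : 0 < ‖x‖ ^ 2)
  linarith [hTU x hxU, hT'W x hxW]

end LinearMap.IsSymmetric

namespace Matrix.IsHermitian

open scoped MatrixOrder

section RCLike

variable {𝕜 : Type*} [RCLike 𝕜] {n : ℕ} {A B : Matrix (Fin n) (Fin n) 𝕜} {f g : Fin n → ℝ}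

/-- Mathlib sorts the eigenvalues of a symmetric operator decreasingly, hence the `rev`. -/
lemma eq_eigenvalues_toEuclideanLin_rev (hA : A.IsHermitian) (hf : Monotone f)
    (hAf : A.charpoly = ∏ j, (X - C (f j : 𝕜))) (j : Fin n) :
    f j = (isSymmetric_toEuclideanLin_iff.mpr hA).eigenvalues finrank_euclideanSpace_fin j.rev := by
  set hT := isSymmetric_toEuclideanLin_iff.mpr hA
  have hanti : Antitone (hT.eigenvalues finrank_euclideanSpace_fin) := hT.eigenvalues_antitone _
  refine congrFun (hf.eq_of_map_univ_val_eq (hanti.comp Fin.rev_anti) ?_) j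
  have hchar : A.charpoly = ∏ i, (X - C (hT.eigenvalues finrank_euclideanSpace_fin i : 𝕜)) :=
    (charpoly_toLin A (PiLp.basisFun 2 𝕜 (Fin n))).symm.trans (hT.charpoly_eq _)
  rw [hAf] at hchar
  have hroots := congrArg (fun p => p.roots.map re) hchar
  simp only [roots_prod_univ_X_sub_C, Multiset.map_map] at hroots
  rw [show _ ∘ Fin.rev = _ ∘ Fin.revPerm from rfl, ← Multiset.map_map,
    Multiset.map_univ_val_equiv]
  simpa [Function.comp_def] using hroots

lemma apply_le_apply_of_le (hA : A.IsHermitian) (hB : B.IsHermitian) (hAB : A ≤ B)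
    (hf : Monotone f) (hg : Monotone g) (hAf : A.charpoly = ∏ j, (X - C (f j : 𝕜)))
    (hBg : B.charpoly = ∏ j, (X - C (g j : 𝕜))) (j : Fin n) : f j ≤ g j := by
  rw [hA.eq_eigenvalues_toEuclideanLin_rev hf hAf, hB.eq_eigenvalues_toEuclideanLin_rev hg hBg]
  refine LinearMap.IsSymmetric.eigenvalues_le_of_isPositive_sub _ _ _ ?_ _
  rw [← map_sub, isPositive_toEuclideanLin_iff]
  exact (sub_nonneg.mpr hAB).posSemidef

lemma neg_apply_rev_le_of_neg_le (hA : A.IsHermitian) (hB : B.IsHermitian) (hAB : -B ≤ A)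
    (hf : Monotone f) (hg : Monotone g) (hAf : A.charpoly = ∏ j, (X - C (f j : 𝕜)))
    (hBg : B.charpoly = ∏ j, (X - C (g j : 𝕜))) (j : Fin n) : -g j.rev ≤ f j := by
  rw [hA.eq_eigenvalues_toEuclideanLin_rev hf hAf, hB.eq_eigenvalues_toEuclideanLin_rev hg hBg]
  refine LinearMap.IsSymmetric.neg_eigenvalues_rev_le_of_isPositive_add _ _ _ ?_ _
  rw [← map_add, isPositive_toEuclideanLin_iff]
  exact (neg_le_iff_add_nonneg.mp hAB).posSemidef

end RCLike

variable {n : Type*} [Fintype n] [DecidableEq n] {A : Matrix n n ℝ}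

lemma matAbs_eq_cfc (hA : A.IsHermitian) : matAbs hA = cfc (fun x : ℝ => |x|) A := by
  rw [hA.cfc_eq, IsHermitian.cfc, Unitary.conjStarAlgAut_apply]
  rfl

lemma isHermitian_matAbs (hA : A.IsHermitian) : (matAbs hA).IsHermitian := by
  rw [matAbs_eq_cfc]
  exact cfc_predicate _ A

lemma le_matAbs (hA : A.IsHermitian) : A ≤ matAbs hA := by
  rw [matAbs_eq_cfc]
  conv_lhs => rw [← cfc_id' ℝ A hA.isSelfAdjoint]
  exact cfc_mono fun x _ => le_abs_self x

lemma neg_matAbs_le (hA : A.IsHermitian) : -matAbs hA ≤ A := by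
  rw [matAbs_eq_cfc, ← cfc_neg]
  conv_rhs => rw [← cfc_id' ℝ A hA.isSelfAdjoint]
  exact cfc_mono fun x _ => neg_abs_le x

end Matrix.IsHermitian

theorem eigenvalue_bounds_TA_general {n : ℕ}
    {A T : Matrix (Fin n) (Fin n) ℝ} (hA : A.IsHermitian)
    (hT : T.PosDef)
    (lam mu : Fin n → ℝ) (hlam_mono : Monotone lam) (hmu_mono : Monotone mu)
    (hlam : (T * A).charpoly = ∏ j, (X - C (lam j)))
    (hmu : (T * matAbs hA).charpoly = ∏ j, (X - C (mu j))) :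
    ∀ j : Fin n, -mu j.rev ≤ lam j ∧ lam j ≤ mu j := by
  open scoped MatrixOrder in
  obtain ⟨R, hR, rfl⟩ : ∃ R, 0 ≤ R ∧ R * R = T :=
    ⟨CFC.sqrt T, CFC.sqrt_nonneg T, CFC.sqrt_mul_sqrt_self T hT.posSemidef.nonneg⟩
  rw [Matrix.mul_assoc, charpoly_mul_comm] at hlam hmu
  have hS : (R * A * R).IsHermitian := hA.isSelfAdjoint.conjugate_self hR.isSelfAdjoint
  have hM : (R * matAbs hA * R).IsHermitian :=
    hA.isHermitian_matAbs.isSelfAdjoint.conjugate_self hR.isSelfAdjoint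
  have hSM : R * A * R ≤ R * matAbs hA * R := conjugate_le_conjugate_of_nonneg hA.le_matAbs hR
  have hMS : -(R * matAbs hA * R) ≤ R * A * R := by
    simpa only [mul_neg, neg_mul] using conjugate_le_conjugate_of_nonneg hA.neg_matAbs_le hR
  exact fun j => ⟨hS.neg_apply_rev_le_of_neg_le hM hMS hlam_mono hmu_mono hlam hmu j,
    hS.apply_le_apply_of_le hM hSM hlam_mono hmu_mono hlam hmu j⟩

/-- Let `A` be symmetric nonsingular indefinite and `T` SPD.  If
`μ₁ ≤ ⋯ ≤ μₙ` are the eigenvalues of `T|A|` and `λ₁ ≤ ⋯ ≤ λₙ` the (real)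
eigenvalues of `TA`, then `−μ_{n−j+1} ≤ λ_j ≤ μ_j` for all `j`.  Eigenvalues
are encoded through factorizations of the characteristic polynomials. -/
theorem eigenvalue_bounds_TA {n : ℕ}
    {A T : Matrix (Fin n) (Fin n) ℝ} (hA : A.IsHermitian) (hdet : IsUnit A.det)
    (hT : T.PosDef)
    (hindef : (∃ i, hA.eigenvalues i < 0) ∧ (∃ i, 0 < hA.eigenvalues i))
    (lam mu : Fin n → ℝ) (hlam_mono : Monotone lam) (hmu_mono : Monotone mu)
    (hlam : (T * A).charpoly = ∏ j, (X - C (lam j)))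
    (hmu : (T * matAbs hA).charpoly = ∏ j, (X - C (mu j))) :
    ∀ j : Fin n, -mu j.rev ≤ lam j ∧ lam j ≤ mu j :=
  eigenvalue_bounds_TA_general hA hT lam mu hlam_mono hmu_mono hlam hmu
end

section
/- Let A ∈ ℝ^{n×n} be symmetric nonsingular indefinite, T symmetric positive definite, and suppose there exist constants δ₁ ≥ δ₀ > 0 with δ₀(v, T^{-1}v) ≤ (v, |A|v) ≤ δ₁(v, T^{-1}v) for all v. Then every eigenvalue of TA lies in [−δ₁, −δ₀] ∪ [δ₀, δ₁]. -/
open Matrix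

/-!
If `T A v = λ v` with `v ≠ 0`, then `A v = λ G v` for `G = T⁻¹`. Writing `B = |A|`, the functional
calculus gives `A B⁻¹ A = B`, hence `(v, B v) = λ² (G v, B⁻¹ G v)`. The spectral equivalence
`δ₀ G ≤ B ≤ δ₁ G` inverts to `δ₁⁻¹ G⁻¹ ≤ B⁻¹ ≤ δ₀⁻¹ G⁻¹` (proved with Cauchy–Schwarz), and
`(G v, G⁻¹ G v) = (v, G v)`, so comparing the two quadratic forms gives `δ₀² ≤ λ² ≤ δ₁²`.
-/

lemma mem_Icc_neg_union_Icc_of_sq_mem_Icc {a b x : ℝ} (ha : 0 ≤ a) (hb : 0 ≤ b)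
    (hax : a ^ 2 ≤ x ^ 2) (hxb : x ^ 2 ≤ b ^ 2) : x ∈ Set.Icc (-b) (-a) ∪ Set.Icc a b := by
  have hlow : a ≤ |x| := abs_of_nonneg ha ▸ sq_le_sq.mp hax
  have hup : |x| ≤ b := abs_of_nonneg hb ▸ sq_le_sq.mp hxb
  rcases le_or_gt 0 x with hx | hx
  · rw [abs_of_nonneg hx] at hlow hup
    exact Or.inr ⟨hlow, hup⟩
  · rw [abs_of_neg hx] at hlow hup
    exact Or.inl ⟨by linarith, by linarith⟩

namespace Matrix

variable {n : Type*} [Fintype n]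

lemma IsHermitian.dotProduct_mulVec_comm {M : Matrix n n ℝ} (hM : M.IsHermitian) (x y : n → ℝ) :
    x ⬝ᵥ M *ᵥ y = y ⬝ᵥ M *ᵥ x := by
  rw [dotProduct_mulVec, ← mulVec_transpose, ← conjTranspose_eq_transpose_of_trivial, hM.eq,
    dotProduct_comm]

lemma PosSemidef.sq_dotProduct_mulVec_le {M : Matrix n n ℝ} (hM : M.PosSemidef) (x y : n → ℝ) :
    (x ⬝ᵥ M *ᵥ y) ^ 2 ≤ (x ⬝ᵥ M *ᵥ x) * (y ⬝ᵥ M *ᵥ y) := by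
  let := M.toSeminormedAddCommGroup hM
  let := M.toInnerProductSpace hM
  have h := real_inner_mul_inner_self_le y x
  change ((M *ᵥ x) ⬝ᵥ star y) * ((M *ᵥ x) ⬝ᵥ star y) ≤
    ((M *ᵥ y) ⬝ᵥ star y) * ((M *ᵥ x) ⬝ᵥ star x) at h
  simp only [star_trivial] at h
  rw [dotProduct_comm (M *ᵥ x) y, hM.isHermitian.dotProduct_mulVec_comm y x] at h
  rw [sq, mul_comm (x ⬝ᵥ M *ᵥ x)]
  simpa only [dotProduct_comm (M *ᵥ _)] using h

lemma PosSemidef.dotProduct_mulVec_self_nonneg {M : Matrix n n ℝ} (hM : M.PosSemidef)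
    (x : n → ℝ) : 0 ≤ x ⬝ᵥ M *ᵥ x := by
  simpa using hM.dotProduct_mulVec_nonneg x

lemma PosDef.dotProduct_mulVec_self_pos {M : Matrix n n ℝ} (hM : M.PosDef) {x : n → ℝ}
    (hx : x ≠ 0) : 0 < x ⬝ᵥ M *ᵥ x := by
  simpa using hM.dotProduct_mulVec_pos hx

lemma PosDef.of_smul_dotProduct_mulVec_le {M N : Matrix n n ℝ} (hM : M.IsHermitian)
    (hN : N.PosDef) {c : ℝ} (hc : 0 < c) (h : ∀ x, c * (x ⬝ᵥ N *ᵥ x) ≤ x ⬝ᵥ M *ᵥ x) : M.PosDef :=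
  .of_dotProduct_mulVec_pos hM fun x hx => by
    simpa using (mul_pos hc (hN.dotProduct_mulVec_self_pos hx)).trans_le (h x)

lemma dotProduct_mul_mul_mulVec_of_mulVec_eq_smul {A C : Matrix n n ℝ} (hA : A.IsHermitian)
    {v w : n → ℝ} {μ : ℝ} (hv : A *ᵥ v = μ • w) :
    v ⬝ᵥ (A * C * A) *ᵥ v = μ ^ 2 * (w ⬝ᵥ C *ᵥ w) := by
  rw [← mulVec_mulVec, ← mulVec_mulVec, hA.dotProduct_mulVec_comm, hv, mulVec_smul,
    smul_dotProduct, dotProduct_smul, smul_eq_mul, smul_eq_mul, dotProduct_comm]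
  ring

variable [DecidableEq n]

lemma ne_zero_of_mem_spectrum {A : Matrix n n ℝ} (hdet : IsUnit A.det) {x : ℝ}
    (hx : x ∈ spectrum ℝ A) : x ≠ 0 := by
  rintro rfl
  exact spectrum.zero_notMem_iff ℝ |>.mpr ((isUnit_iff_isUnit_det A).mpr hdet) hx

lemma exists_mulVec_eq_smul_of_mem_spectrum {K : Type*} [Field K] {M : Matrix n n K} {μ : K}
    (hμ : μ ∈ spectrum K M) : ∃ v ≠ 0, M *ᵥ v = μ • v := by
  rw [← spectrum_toLin', ← Module.End.hasEigenvalue_iff_mem_spectrum] at hμ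
  obtain ⟨v, hv, hv0⟩ := hμ.exists_hasEigenvector
  exact ⟨v, hv0, by simpa using Module.End.mem_eigenspace_iff.mp hv⟩

lemma PosDef.mulVec_inv_mulVec {M : Matrix n n ℝ} (hM : M.PosDef) (x : n → ℝ) :
    M *ᵥ M⁻¹ *ᵥ x = x := by
  rw [mulVec_mulVec, mul_nonsing_inv M ((isUnit_iff_isUnit_det M).mp hM.isUnit), one_mulVec]

lemma PosDef.inv_mulVec_mulVec {M : Matrix n n ℝ} (hM : M.PosDef) (x : n → ℝ) :
    M⁻¹ *ᵥ M *ᵥ x = x := by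
  rw [mulVec_mulVec, nonsing_inv_mul M ((isUnit_iff_isUnit_det M).mp hM.isUnit), one_mulVec]

/-- The inverse is antitone for the Loewner order, stated on quadratic forms. -/
lemma PosDef.dotProduct_inv_mulVec_le {M N : Matrix n n ℝ} (hM : M.PosDef) (hN : N.PosDef)
    {a b : ℝ} (ha : 0 ≤ a) (hb : 0 ≤ b) (h : ∀ x, a * (x ⬝ᵥ N *ᵥ x) ≤ b * (x ⬝ᵥ M *ᵥ x))
    (w : n → ℝ) : a * (w ⬝ᵥ M⁻¹ *ᵥ w) ≤ b * (w ⬝ᵥ N⁻¹ *ᵥ w) := by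
  set u := M⁻¹ *ᵥ w
  set z := N⁻¹ *ᵥ w
  set r := w ⬝ᵥ u
  set s := w ⬝ᵥ z
  have hr : 0 ≤ r := hM.inv.posSemidef.dotProduct_mulVec_self_nonneg w
  have hs : 0 ≤ s := hN.inv.posSemidef.dotProduct_mulVec_self_nonneg w
  have hzNu : z ⬝ᵥ N *ᵥ u = r := by
    rw [hN.isHermitian.dotProduct_mulVec_comm, hN.mulVec_inv_mulVec, dotProduct_comm]
  have hzNz : z ⬝ᵥ N *ᵥ z = s := by rw [hN.mulVec_inv_mulVec, dotProduct_comm]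
  have huMu : u ⬝ᵥ M *ᵥ u = r := by rw [hM.mulVec_inv_mulVec, dotProduct_comm]
  have hcs := hN.posSemidef.sq_dotProduct_mulVec_le z u
  rw [hzNu, hzNz] at hcs
  have hu := h u
  rw [huMu] at hu
  -- Cauchy–Schwarz for `N` and `h u` give `a r² ≤ a s (u, N u) ≤ b s r`; cancel `r`.
  rcases hr.eq_or_lt with hr0 | hr0
  · rw [← hr0, mul_zero]
    exact mul_nonneg hb hs
  · refine le_of_mul_le_mul_right ?_ hr0
    nlinarith [mul_le_mul_of_nonneg_left hcs ha, mul_le_mul_of_nonneg_left hu hs]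

lemma sq_mem_Icc_of_mulVec_eq_smul_mulVec {A B G : Matrix n n ℝ} (hA : A.IsHermitian)
    (hB : B.PosDef) (hG : G.PosDef) (hAB : A * B⁻¹ * A = B) {δ₀ δ₁ : ℝ} (hδ₀ : 0 < δ₀)
    (hδ : δ₀ ≤ δ₁) (hlow : ∀ x, δ₀ * (x ⬝ᵥ G *ᵥ x) ≤ x ⬝ᵥ B *ᵥ x)
    (hup : ∀ x, x ⬝ᵥ B *ᵥ x ≤ δ₁ * (x ⬝ᵥ G *ᵥ x)) {v : n → ℝ} (hv0 : v ≠ 0) {μ : ℝ}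
    (hv : A *ᵥ v = μ • G *ᵥ v) : δ₀ ^ 2 ≤ μ ^ 2 ∧ μ ^ 2 ≤ δ₁ ^ 2 := by
  set w := G *ᵥ v
  set q := v ⬝ᵥ G *ᵥ v
  set t := w ⬝ᵥ B⁻¹ *ᵥ w
  have hBv : v ⬝ᵥ B *ᵥ v = μ ^ 2 * t := by
    rw [← dotProduct_mul_mul_mulVec_of_mulVec_eq_smul hA hv, hAB]
  have hGw : w ⬝ᵥ G⁻¹ *ᵥ w = q := by
    rw [hG.inv_mulVec_mulVec, dotProduct_comm]
  have hBv_pos : 0 < μ ^ 2 * t := hBv ▸ hB.dotProduct_mulVec_self_pos hv0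
  have ht : 0 < t := pos_of_mul_pos_right hBv_pos (sq_nonneg μ)
  have hqt : δ₀ * t ≤ q := by
    simpa [hGw] using hB.dotProduct_inv_mulVec_le hG hδ₀.le zero_le_one
      (fun x => by simpa using hlow x) w
  have htq : q ≤ δ₁ * t := by
    simpa [hGw] using hG.dotProduct_inv_mulVec_le hB zero_le_one (hδ₀.le.trans hδ)
      (fun x => by simpa using hup x) w
  have hl := hlow v
  have hu := hup v
  rw [hBv] at hl hu
  -- `δ₀² t ≤ δ₀ q ≤ μ² t` and `μ² t ≤ δ₁ q ≤ δ₁² t`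
  constructor
  · nlinarith
  · nlinarith

end Matrix

section matAbs

variable {n : Type*} [Fintype n] [DecidableEq n] {A : Matrix n n ℝ}

lemma matAbs_eq_cfc (hA : A.IsHermitian) : matAbs hA = cfc (fun x : ℝ => |x|) A := by
  rw [hA.cfc_eq, IsHermitian.cfc, Unitary.conjStarAlgAut_apply]
  rfl

lemma matAbs_isHermitian (hA : A.IsHermitian) : (matAbs hA).IsHermitian := by
  rw [matAbs_eq_cfc]
  exact cfc_predicate _ _

lemma matAbs_inv (hA : A.IsHermitian) (hdet : IsUnit A.det) :
    (matAbs hA)⁻¹ = cfc (fun x : ℝ => |x|⁻¹) A := by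
  have hcont (f : ℝ → ℝ) : ContinuousOn f (spectrum ℝ A) :=
    A.finite_real_spectrum.continuousOn f
  apply inv_eq_right_inv
  rw [matAbs_eq_cfc, ← cfc_mul _ _ _ (hcont _) (hcont _), ← cfc_one ℝ A]
  refine cfc_congr fun x hx => ?_
  simp [ne_zero_of_mem_spectrum hdet hx]

lemma mul_matAbs_inv_mul (hA : A.IsHermitian) (hdet : IsUnit A.det) :
    A * (matAbs hA)⁻¹ * A = matAbs hA := by
  have hcont (f : ℝ → ℝ) : ContinuousOn f (spectrum ℝ A) :=
    A.finite_real_spectrum.continuousOn f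
  rw [matAbs_inv hA hdet, matAbs_eq_cfc]
  nth_rw 1 [← cfc_id' ℝ A]
  nth_rw 3 [← cfc_id' ℝ A]
  rw [← cfc_mul _ _ _ (hcont _) (hcont _), ← cfc_mul _ _ _ (hcont _) (hcont _)]
  refine cfc_congr fun x hx => ?_
  rw [mul_right_comm, ← abs_mul_abs_self x,
    mul_inv_cancel_right₀ (abs_ne_zero.mpr (ne_zero_of_mem_spectrum hdet hx))]

end matAbs

theorem spectrum_TA_subset_general {n : Type*} [Fintype n] [DecidableEq n]
    {A T : Matrix n n ℝ} (hA : A.IsHermitian) (hdet : IsUnit A.det)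
    (hT : T.PosDef)
    {δ₀ δ₁ : ℝ} (hδ₀ : 0 < δ₀) (hδ : δ₀ ≤ δ₁)
    (hlow : ∀ v : n → ℝ, δ₀ * (v ⬝ᵥ T⁻¹.mulVec v) ≤ v ⬝ᵥ (matAbs hA).mulVec v)
    (hup : ∀ v : n → ℝ, v ⬝ᵥ (matAbs hA).mulVec v ≤ δ₁ * (v ⬝ᵥ T⁻¹.mulVec v)) :
    ∀ lam ∈ spectrum ℝ (T * A),
      lam ∈ Set.Icc (-δ₁) (-δ₀) ∪ Set.Icc δ₀ δ₁ := by
  intro lam hlam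
  obtain ⟨v, hv0, hv⟩ := exists_mulVec_eq_smul_of_mem_spectrum hlam
  have hAv : A *ᵥ v = lam • T⁻¹ *ᵥ v := by
    rw [← hT.inv_mulVec_mulVec (A *ᵥ v), mulVec_mulVec v T A, hv, mulVec_smul]
  have hB : (matAbs hA).PosDef :=
    .of_smul_dotProduct_mulVec_le (matAbs_isHermitian hA) hT.inv hδ₀ hlow
  obtain ⟨hlam₀, hlam₁⟩ := sq_mem_Icc_of_mulVec_eq_smul_mulVec hA hB hT.inv
    (mul_matAbs_inv_mul hA hdet) hδ₀ hδ hlow hup hv0 hAv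
  exact mem_Icc_neg_union_Icc_of_sq_mem_Icc hδ₀.le (hδ₀.le.trans hδ) hlam₀ hlam₁

/-- If `A` is symmetric nonsingular indefinite, `T` is SPD, and
`δ₀ (v, T⁻¹ v) ≤ (v, |A| v) ≤ δ₁ (v, T⁻¹ v)` for all `v` with
`δ₁ ≥ δ₀ > 0`, then every eigenvalue of `TA` lies in
`[−δ₁, −δ₀] ∪ [δ₀, δ₁]`. -/
theorem spectrum_TA_subset {n : Type*} [Fintype n] [DecidableEq n]
    {A T : Matrix n n ℝ} (hA : A.IsHermitian) (hdet : IsUnit A.det)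
    (hT : T.PosDef)
    (hindef : (∃ i, hA.eigenvalues i < 0) ∧ (∃ i, 0 < hA.eigenvalues i))
    {δ₀ δ₁ : ℝ} (hδ₀ : 0 < δ₀) (hδ : δ₀ ≤ δ₁)
    (hlow : ∀ v : n → ℝ, δ₀ * (v ⬝ᵥ T⁻¹.mulVec v) ≤ v ⬝ᵥ (matAbs hA).mulVec v)
    (hup : ∀ v : n → ℝ, v ⬝ᵥ (matAbs hA).mulVec v ≤ δ₁ * (v ⬝ᵥ T⁻¹.mulVec v)) :
    ∀ lam ∈ spectrum ℝ (T * A),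
      lam ∈ Set.Icc (-δ₁) (-δ₀) ∪ Set.Icc δ₀ δ₁ :=
  spectrum_TA_subset_general hA hdet hT hδ₀ hδ hlow hup
end

section
/- For the coefficient g_j^{(11)} = (1 − τθ_j)^{2ν}((c²/θ_j − c_j² − c_j⁴)/(c²/θ_j − c_j²))(c²/θ_j − 1) + (2 − c²/θ_j), with θ_j < c², c_j² ∈ (1/2, 1), τθ_j ∈ (0, 2/3) (so (1−τθ_j)^{2ν} ∈ (3^{−2ν}, 1)), the following bounds hold: if we write ρ = c²/θ_j > 1, then (ρ − 2)/(ρ − 1) ≤ (ρ − c_j² − c_j⁴)/(ρ − c_j²) ≤ (ρ − 3/4)/(ρ − 1/2), and consequently l_j < g_j^{(11)} < (3ρ − 1)/(4ρ − 2), where l_j = 0 if 1 < ρ ≤ 2 and l_j = 2 − ρ if ρ > 2. -/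
set_option maxHeartbeats 1000000


/-- Bounds for the smooth-mode error coefficient
`g_j^{(11)} = (1 − τθ_j)^{2ν} ((ρ − c_j² − c_j⁴)/(ρ − c_j²)) (ρ − 1) + (2 − ρ)`
with `ρ = c²/θ_j > 1`, `c_j² ∈ (1/2, 1)`, `0 < τθ_j < 2/3`, `ν ≥ 1`:
`(ρ−c_j²−c_j⁴)/(ρ−c_j²) ≤ (ρ−3/4)/(ρ−1/2)` and
`l_j < g_j^{(11)} < (3ρ−1)/(4ρ−2)`, where `l_j = 0` if `ρ ≤ 2` and
`l_j = 2 − ρ` if `ρ > 2`. -/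
theorem g11_bounds {a ρ cj2 : ℝ} (ν : ℕ) (hν : 1 ≤ ν)
    (ha0 : 0 < a) (ha1 : a < 2 / 3)
    (hρ : 1 < ρ) (hc0 : 1 / 2 < cj2) (hc1 : cj2 < 1) :
    ((ρ - 2) / (ρ - 1) ≤ (ρ - cj2 - cj2 ^ 2) / (ρ - cj2) ∧
      (ρ - cj2 - cj2 ^ 2) / (ρ - cj2) ≤ (ρ - 3 / 4) / (ρ - 1 / 2)) ∧
    (if ρ ≤ 2 then (0 : ℝ) else 2 - ρ) <
        (1 - a) ^ (2 * ν) * ((ρ - cj2 - cj2 ^ 2) / (ρ - cj2)) * (ρ - 1) +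
          (2 - ρ) ∧
      (1 - a) ^ (2 * ν) * ((ρ - cj2 - cj2 ^ 2) / (ρ - cj2)) * (ρ - 1) +
          (2 - ρ) <
        (3 * ρ - 1) / (4 * ρ - 2) := by
  have hd : (0:ℝ) < ρ - cj2 := by linarith
  have hd1 : (0:ℝ) < ρ - 1 := by linarith
  have hd2 : (0:ℝ) < ρ - 1/2 := by linarith
  have hlow : (ρ - 2) / (ρ - 1) ≤ (ρ - cj2 - cj2 ^ 2) / (ρ - cj2) := by
    rw [div_le_div_iff₀ hd1 hd]
    nlinarith [mul_pos (sub_pos.2 hc1) (by linarith : (0:ℝ) < ρ)]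
  have hup : (ρ - cj2 - cj2 ^ 2) / (ρ - cj2) ≤ (ρ - 3 / 4) / (ρ - 1 / 2) := by
    rw [div_le_div_iff₀ hd hd2]
    nlinarith [mul_pos (sub_pos.2 hc0) (by linarith : (0:ℝ) < ρ)]
  have hP0 : (0:ℝ) < (1 - a) ^ (2 * ν) := pow_pos (by linarith) _
  have hP1 : (1 - a) ^ (2 * ν) < 1 :=
    pow_lt_one₀ (by linarith) (by linarith) (by omega)
  set P := (1 - a) ^ (2 * ν) with hPdef
  set F := (ρ - cj2 - cj2 ^ 2) / (ρ - cj2) with hFdef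
  have hlb : ρ - 2 ≤ F * (ρ - 1) := by
    have := (div_le_iff₀ hd1).mp hlow
    linarith
  have hub : F ≤ (ρ - 3 / 4) / (ρ - 1 / 2) := hup
  have hFup : (0:ℝ) < (ρ - 3 / 4) / (ρ - 1 / 2) := div_pos (by linarith) hd2
  refine ⟨⟨hlow, hup⟩, ?_, ?_⟩
  · -- lower bound
    split_ifs with h
    · -- ρ ≤ 2
      rcases le_or_gt F 0 with hF | hF
      · -- F ≤ 0, then ρ < 2
        have hnum : ρ - cj2 - cj2 ^ 2 ≤ 0 := by
          by_contra hcon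
          push_neg at hcon
          exact absurd (div_pos hcon hd) (not_lt.2 hF)
        have hρ2 : ρ < 2 := by nlinarith
        rcases eq_or_lt_of_le hF with hF0 | hF0
        · rw [← hF0] at *; nlinarith
        · have h1 : (1 - P) * ((-F) * (ρ - 1)) > 0 :=
            mul_pos (by linarith) (mul_pos (by linarith) hd1)
          nlinarith
      · -- F > 0
        have : 0 < P * F * (ρ - 1) := by positivity
        linarith
    · -- ρ > 2
      push_neg at h
      have hF : 0 < F := div_pos (by nlinarith) hd
      have : 0 < P * F * (ρ - 1) := by positivity
      linarith
  · -- upper bound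
    have hid : (3 * ρ - 1) / (4 * ρ - 2) =
        (ρ - 3 / 4) / (ρ - 1 / 2) * (ρ - 1) + (2 - ρ) := by
      rw [eq_comm, div_mul_eq_mul_div, div_add' _ _ _ hd2.ne',
        div_eq_div_iff hd2.ne' (by linarith : (4 * ρ - 2 : ℝ) ≠ 0)]
      ring
    rw [hid]
    have hkey : P * F * (ρ - 1) < (ρ - 3 / 4) / (ρ - 1 / 2) * (ρ - 1) := by
      rcases le_or_gt F 0 with hF | hF
      · have : P * F * (ρ - 1) ≤ 0 := by
          have := mul_nonneg hP0.le (neg_nonneg.2 hF)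
          nlinarith
        have : 0 < (ρ - 3 / 4) / (ρ - 1 / 2) * (ρ - 1) := mul_pos hFup hd1
        linarith
      · have h1 : P * F < F := by
          calc P * F < 1 * F := mul_lt_mul_of_pos_right hP1 hF
          _ = F := one_mul F
        have h2 : P * F * (ρ - 1) < F * (ρ - 1) := mul_lt_mul_of_pos_right h1 hd1
        have h3 : F * (ρ - 1) ≤ (ρ - 3 / 4) / (ρ - 1 / 2) * (ρ - 1) :=
          mul_le_mul_of_nonneg_right hub hd1.le
        linarith
    linarith
end
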